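/- Fix an integer j₀ ≥ 2, let C = { Σ_{i∈F} ε_i e_i : F ⊂ ℕ finite, card F ≤ n_{j₀−1}, ε_i ∈ {−1,1} }, and let D' be the smallest subset of c₀₀ containing C and closed under the operations: for every j ≥ 1 and every f_1 < f_2 < ⋯ < f_d in D' with d ≤ 5·n_j, the element (1/m_j)(f_1 + ⋯ + f_d) belongs to D'. Then for every h ∈ D', the set { k ∈ ℕ : |h(k)| > 1/m_{j₀} } has cardinality strictly less than (5·n_{j₀−1})^{log₂ m_{j₀}} (note log₂ m_{j₀} = 5^{j₀−1}). -/

import Mathlib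

noncomputable section

/-- The sequence `m_j`: `m 1 = 2`, `m (j+1) = (m j)^5`, i.e. `m j = 2 ^ 5 ^ (j-1)`. -/
def mseq (j : ℕ) : ℕ := 2 ^ 5 ^ (j - 1)

/-- The sequence `n_j`: `n 1 = 4` and `n (j+1) = (5 n_j) ^ (3 · 5^j)`. -/
def nseq : ℕ → ℕ
  | 0 => 1
  | 1 => 4
  | (j + 2) => (5 * nseq (j + 1)) ^ (3 * 5 ^ (j + 1))

/-- `f < g` for finitely supported functions: every element of the support of `f` is
less than every element of the support of `g`. -/
def BlockLt (f g : ℕ →₀ ℝ) : Prop :=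
  ∀ a ∈ f.support, ∀ b ∈ g.support, a < b

/-- The action of `f ∈ c₀₀` on `x ∈ c₀₀`: `f(x) = ∑ k, f k * x k`. -/
def fapply (f x : ℕ →₀ ℝ) : ℝ := x.sum fun i v => f i * v

/-- The smallest subset `D'` of `c₀₀` containing the set
`C = {∑_{i ∈ F} ±e_i : card F ≤ n_{j₀-1}}` and closed under the
`(𝓐_{5 n_j}, 1/m_j)` operations for all `j ≥ 1`. -/
inductive Dset (j₀ : ℕ) : (ℕ →₀ ℝ) → Prop
  | base (h : ℕ →₀ ℝ) (hcard : h.support.card ≤ nseq (j₀ - 1))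
      (hval : ∀ k ∈ h.support, h k = 1 ∨ h k = -1) : Dset j₀ h
  | op (j d : ℕ) (hj : 1 ≤ j) (hd : d ≤ 5 * nseq j) (f : Fin d → (ℕ →₀ ℝ))
      (hmem : ∀ i, Dset j₀ (f i))
      (hblock : ∀ i i' : Fin d, i < i' → BlockLt (f i) (f i')) :
      Dset j₀ ((mseq j : ℝ)⁻¹ • ∑ i, f i)


/-!
Measure the size of a coordinate on the dyadic scale, `|h k| > 2⁻ᴱ`. An operation with
weight `1/m_j = 2^(-5^(j-1))` shifts this scale by `5^(j-1)`. For `E ≤ 5^(j₀-1)` only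
operations with `j < j₀` can produce coordinates above `2⁻ᴱ`, and each of them combines at most
`5 n_j ≤ 5 n_{j₀-1}` blocks with disjoint supports. So the count of coordinates above `2⁻ᴱ`
grows by a factor of at most `5 n_{j₀-1}` per unit of `E`. Induction on `D'` therefore gives
`5 · #{k : |h k| > 2⁻ᴱ} ≤ (5 n_{j₀-1})^E`.
-/

open Finset

lemma nseq_pos : ∀ j, 0 < nseq j
  | 0 => Nat.one_pos
  | 1 => by norm_num [nseq]
  | (j + 2) => by
      have := nseq_pos (j + 1)
      rw [nseq]
      positivity

lemma nseq_mono : Monotone nseq := by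
  refine monotone_nat_of_le_succ fun j => ?_
  match j with
  | 0 => norm_num [nseq]
  | (j + 1) =>
    calc nseq (j + 1) ≤ 5 * nseq (j + 1) := Nat.le_mul_of_pos_left _ (by norm_num)
      _ ≤ (5 * nseq (j + 1)) ^ (3 * 5 ^ (j + 1)) :=
        Nat.le_self_pow (by positivity) _

lemma mseq_cast (j : ℕ) : (mseq j : ℝ) = 2 ^ 5 ^ (j - 1) := by
  simp [mseq]

lemma one_le_mseq (j : ℕ) : (1 : ℝ) ≤ mseq j :=
  Nat.one_le_cast.2 Nat.one_le_two_pow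

lemma BlockLt.disjoint {f g : ℕ →₀ ℝ} (hfg : BlockLt f g) : Disjoint f.support g.support :=
  Finset.disjoint_left.2 fun a ha hb => lt_irrefl a (hfg a ha a hb)

lemma pairwise_disjoint_support_of_blockLt {ι : Type*} [LinearOrder ι] {f : ι → ℕ →₀ ℝ}
    (hblock : ∀ i i', i < i' → BlockLt (f i) (f i')) :
    Pairwise fun i i' => Disjoint (f i).support (f i').support := by
  intro i i' hne
  rcases hne.lt_or_gt with hlt | hgt
  · exact (hblock _ _ hlt).disjoint
  · exact (hblock _ _ hgt).disjoint.symm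

section DisjointSum

variable {α ι : Type*} [Fintype ι]

lemma Finsupp.sum_apply_eq_zero_or_exists {M : Type*} [AddCommMonoid M] {f : ι → α →₀ M}
    (hf : Pairwise fun i i' => Disjoint (f i).support (f i').support) (k : α) :
    (∑ i, f i) k = 0 ∨ ∃ i, (∑ i, f i) k = f i k := by
  rw [Finsupp.finsetSum_apply]
  by_cases hk : ∃ i, f i k ≠ 0
  · obtain ⟨i, hi⟩ := hk
    refine Or.inr ⟨i, Finset.sum_eq_single i (fun i' _ hne => ?_) (by simp)⟩
    exact Finsupp.notMem_support_iff.1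
      (Finset.disjoint_right.1 (hf hne) (Finsupp.mem_support_iff.2 hi))
  · simp [not_exists_not.1 hk]

lemma abs_smul_sum_apply_le {f : ι → α →₀ ℝ}
    (hf : Pairwise fun i i' => Disjoint (f i).support (f i').support)
    {c : ℝ} (hc : 0 ≤ c) (hf₁ : ∀ i k, |f i k| ≤ 1) (k : α) : |(c • ∑ i, f i) k| ≤ c := by
  rw [Finsupp.smul_apply, smul_eq_mul, abs_mul, abs_of_nonneg hc]
  refine mul_le_of_le_one_right hc ?_
  rcases Finsupp.sum_apply_eq_zero_or_exists hf k with h | ⟨i, h⟩ <;> rw [h]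
  · simp
  · exact hf₁ i k

end DisjointSum

lemma Dset.abs_apply_le_one {j₀ : ℕ} {h : ℕ →₀ ℝ} (hh : Dset j₀ h) (k : ℕ) : |h k| ≤ 1 := by
  induction hh generalizing k with
  | base h _ hval =>
    rcases eq_or_ne (h k) 0 with h0 | h0
    · simp [h0]
    · rcases hval k (Finsupp.mem_support_iff.2 h0) with hv | hv <;> simp [hv]
  | op j d _ _ f _ hblock ih =>
    exact (abs_smul_sum_apply_le (pairwise_disjoint_support_of_blockLt hblock) (by positivity)
      ih k).trans (inv_le_one_of_one_le₀ (one_le_mseq j))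

def largeCoords (h : ℕ →₀ ℝ) (t : ℝ) : Finset ℕ :=
  h.support.filter fun k => t < |h k|

lemma coe_largeCoords (h : ℕ →₀ ℝ) {t : ℝ} (ht : 0 ≤ t) :
    (largeCoords h t : Set ℕ) = {k | t < |h k|} := by
  ext k
  simp only [largeCoords, coe_filter, Finsupp.mem_support_iff, Set.mem_ofPred_eq,
    and_iff_right_iff_imp]
  intro hk h0
  rw [h0, abs_zero] at hk
  exact ht.not_gt hk

lemma largeCoords_eq_empty {h : ℕ →₀ ℝ} {t : ℝ} (hh : ∀ k, |h k| ≤ t) : largeCoords h t = ∅ :=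
  Finset.filter_false_of_mem fun k _ => (hh k).not_gt

lemma largeCoords_smul_sum_subset {ι : Type*} [Fintype ι] {f : ι → ℕ →₀ ℝ}
    (hf : Pairwise fun i i' => Disjoint (f i).support (f i').support)
    {c : ℝ} (hc : 0 ≤ c) (t : ℝ) :
    largeCoords (c • ∑ i, f i) (c * t) ⊆ univ.biUnion fun i => largeCoords (f i) t := by
  intro k hk
  simp only [largeCoords, mem_filter, Finsupp.mem_support_iff, Finsupp.smul_apply,
    smul_eq_mul, abs_mul, abs_of_nonneg hc] at hk
  obtain ⟨hne, hlt⟩ := hk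
  rcases Finsupp.sum_apply_eq_zero_or_exists hf k with h | ⟨i, h⟩
  · exact absurd (by rw [h, mul_zero]) hne
  · rw [h] at hne hlt
    exact mem_biUnion.2 ⟨i, mem_univ _,
      mem_filter.2 ⟨Finsupp.mem_support_iff.2 (right_ne_zero_of_mul hne),
        lt_of_mul_lt_mul_left hlt hc⟩⟩

lemma Dset.five_mul_card_largeCoords_le {j₀ : ℕ} {h : ℕ →₀ ℝ} (hh : Dset j₀ h) {E : ℕ}
    (hE₁ : 1 ≤ E) (hE : E ≤ 5 ^ (j₀ - 1)) :
    5 * #(largeCoords h (2 ^ E)⁻¹) ≤ (5 * nseq (j₀ - 1)) ^ E := by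
  have hN : 0 < 5 * nseq (j₀ - 1) := by have := nseq_pos (j₀ - 1); positivity
  induction hh generalizing E with
  | base h hcard _ =>
    calc 5 * #(largeCoords h (2 ^ E)⁻¹) ≤ 5 * nseq (j₀ - 1) :=
          Nat.mul_le_mul_left 5 ((card_filter_le _ _).trans hcard)
      _ = (5 * nseq (j₀ - 1)) ^ 1 := (pow_one _).symm
      _ ≤ (5 * nseq (j₀ - 1)) ^ E := Nat.pow_le_pow_right hN hE₁
  | op j d hj hd f hmem hblock ih =>
    have hdisj := pairwise_disjoint_support_of_blockLt hblock
    rcases le_or_gt E (5 ^ (j - 1)) with hEj | hEj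
    · suffices largeCoords ((mseq j : ℝ)⁻¹ • ∑ i, f i) (2 ^ E)⁻¹ = ∅ by simp [this]
      have hmj : (mseq j : ℝ)⁻¹ ≤ (2 ^ E)⁻¹ := by
        rw [mseq_cast]
        gcongr
        norm_num
      exact largeCoords_eq_empty fun k => (abs_smul_sum_apply_le hdisj (by positivity)
        (fun i => (hmem i).abs_apply_le_one) k).trans hmj
    · obtain ⟨E', rfl⟩ : ∃ E', E = E' + 5 ^ (j - 1) := ⟨E - 5 ^ (j - 1), by omega⟩
      have hjj₀ : j ≤ j₀ - 1 := by
        have := (Nat.pow_lt_pow_iff_right (by norm_num : 1 < 5)).1 (hEj.trans_le hE)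
        omega
      have hsub := largeCoords_smul_sum_subset hdisj (c := (mseq j : ℝ)⁻¹) (by positivity)
        (2 ^ E')⁻¹
      rw [mseq_cast, ← mul_inv, ← pow_add, add_comm (5 ^ (j - 1)), ← mseq_cast] at hsub
      calc 5 * #(largeCoords _ (2 ^ (E' + 5 ^ (j - 1)))⁻¹)
          ≤ 5 * ∑ i, #(largeCoords (f i) (2 ^ E')⁻¹) :=
            Nat.mul_le_mul_left 5 ((card_le_card hsub).trans card_biUnion_le)
        _ = ∑ i, 5 * #(largeCoords (f i) (2 ^ E')⁻¹) := mul_sum _ _ _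
        _ ≤ ∑ _i : Fin d, (5 * nseq (j₀ - 1)) ^ E' :=
            sum_le_sum fun i _ => ih i (by omega) ((Nat.le_add_right _ _).trans hE)
        _ = d * (5 * nseq (j₀ - 1)) ^ E' := by simp
        _ ≤ 5 * nseq (j₀ - 1) * (5 * nseq (j₀ - 1)) ^ E' :=
            Nat.mul_le_mul_right _ (hd.trans (Nat.mul_le_mul_left 5 (nseq_mono hjj₀)))
        _ = (5 * nseq (j₀ - 1)) ^ (E' + 1) := (pow_succ' _ _).symm
        _ ≤ (5 * nseq (j₀ - 1)) ^ (E' + 5 ^ (j - 1)) :=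
            Nat.pow_le_pow_right hN (by have := Nat.one_le_pow (j - 1) 5 (by norm_num); omega)

theorem statement14_general (j₀ : ℕ) (h : ℕ →₀ ℝ) (hh : Dset j₀ h) :
    ({k : ℕ | (1 : ℝ) / (mseq j₀ : ℝ) < |h k|}).Finite ∧
    ({k : ℕ | (1 : ℝ) / (mseq j₀ : ℝ) < |h k|}).ncard
      < (5 * nseq (j₀ - 1)) ^ 5 ^ (j₀ - 1) := by
  rw [one_div, mseq_cast, ← coe_largeCoords h (by positivity)]
  refine ⟨finite_toSet _, ?_⟩
  rw [Set.ncard_coe_finset]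
  have hbound := hh.five_mul_card_largeCoords_le (Nat.one_le_pow _ _ (by norm_num)) le_rfl
  have hpos : 0 < (5 * nseq (j₀ - 1)) ^ 5 ^ (j₀ - 1) := by
    have := nseq_pos (j₀ - 1)
    positivity
  omega

/-- For every `h ∈ D'`, the set `{k : |h(k)| > 1/m_{j₀}}` has
cardinality strictly less than `(5 n_{j₀-1}) ^ (log₂ m_{j₀})`, where
`log₂ m_{j₀} = 5 ^ (j₀ - 1)`. -/
theorem statement14 (j₀ : ℕ) (hj₀ : 2 ≤ j₀) (h : ℕ →₀ ℝ) (hh : Dset j₀ h) :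
    ({k : ℕ | (1 : ℝ) / (mseq j₀ : ℝ) < |h k|}).Finite ∧
    ({k : ℕ | (1 : ℝ) / (mseq j₀ : ℝ) < |h k|}).ncard
      < (5 * nseq (j₀ - 1)) ^ 5 ^ (j₀ - 1) :=
  statement14_general j₀ h hh
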